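/- For the same family of states ρ_N := (2/N) Σ_{k=0}^{N/2−1} |ψ_k⟩⟨ψ_k| with |ψ_k⟩ = (|0^{N−k}1^k⟩ + |1^{N−k}0^k⟩)/√2 and Z = Σ_i σ^z_i, one has I_L(ρ_N, Z) = (2/N)² Σ_{k=0}^{N/2} (N−2k)², which is O(N); hence I_L(ρ_N,Z)/F(ρ_N,Z) → 0 as N → ∞. -/

import Mathlib

open Matrix Finset Filter Topology

/-- `I_L(ρ,A) := -(1/2) tr([ρ,A]²)` (a real quantity; we take the real part). -/
noncomputable def commIL {ι : Type*} [Fintype ι] [DecidableEq ι]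
    (ρ A : Matrix ι ι ℂ) : ℝ :=
  (-(1 / 2) * Matrix.trace ((ρ * A - A * ρ) * (ρ * A - A * ρ))).re

/-- Quantum Fisher information via a spectral decomposition of `ρ`. -/
noncomputable def qfi {ι : Type*} [Fintype ι] (lam : ι → ℝ) (v : ι → ι → ℂ)
    (A : Matrix ι ι ℂ) : ℝ :=
  2 * ∑ a : ι, ∑ b : ι,
    if 0 < lam a + lam b then
      (lam a - lam b) ^ 2 / (lam a + lam b) * Complex.normSq (star (v a) ⬝ᵥ (A *ᵥ v b))
    else 0

/-- `Z = ∑_i σ^z_i` as a diagonal matrix on the computational basis of `N` qubits. -/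
noncomputable def pauliZTotal (N : ℕ) : Matrix (Fin N → Fin 2) (Fin N → Fin 2) ℂ :=
  Matrix.diagonal fun s => ∑ i : Fin N, if s i = 0 then (1 : ℂ) else -1

/-- The basis string `0^{N-k}1^k` (last `k` qubits equal to 1). -/
def baseStr (N k : ℕ) : Fin N → Fin 2 := fun i => if N - k ≤ (i : ℕ) then 1 else 0

/-- The basis string `1^{N-k}0^k`. -/
def flipStr (N k : ℕ) : Fin N → Fin 2 := fun i => if N - k ≤ (i : ℕ) then 0 else 1

/-- `|ψ_k⟩ = (|0^{N-k}1^k⟩ + |1^{N-k}0^k⟩)/√2`. -/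
noncomputable def psiK (N k : ℕ) : (Fin N → Fin 2) → ℂ := fun s =>
  ((if s = baseStr N k then 1 else 0) + (if s = flipStr N k then 1 else 0)) /
    (Real.sqrt 2 : ℂ)

/-- `ρ_N = (2/N) ∑_{k=0}^{N/2-1} |ψ_k⟩⟨ψ_k|`. -/
noncomputable def rhoN (N : ℕ) : Matrix (Fin N → Fin 2) (Fin N → Fin 2) ℂ :=
  ∑ k ∈ Finset.range (N / 2),
    ((2 / (N : ℝ) : ℝ) : ℂ) • Matrix.vecMulVec (psiK N k) (star (psiK N k))

/-! Both halves rest on `ρ_N` being `2/N` times the projector onto the orthonormal states `ψ_k`,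
each of which `Z` maps to a vector orthogonal to every `ψ_l`. Hence `ρ Z ρ = 0` and
`ρ² = (2/N) ρ`, so `tr([ρ,Z]²) = -2 tr(ρ² Z²) = -2 (2/N)² ∑_k ⟨ψ_k|Z²|ψ_k⟩`.
In an eigenbasis of `ρ`, `I_L = ½ ∑_{a,b} (λ_a - λ_b)² |Z_ab|²`, while `ρ² = (2/N) ρ` forces every
eigenvalue into `{0, 2/N}`; so each weight `(λ_a - λ_b)² / (λ_a + λ_b)` of `F` is at least
`(N/2) (λ_a - λ_b)²`, whence `F ≥ N · I_L` and `I_L / F ≤ 1/N`. -/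

section Conjugation

variable {ι R : Type*} [Fintype ι] [DecidableEq ι] [CommRing R]

lemma trace_commutator_mul_self (ρ A : Matrix ι ι R) :
    trace ((ρ * A - A * ρ) * (ρ * A - A * ρ)) =
      2 * trace (ρ * A * ρ * A) - 2 * trace (ρ * ρ * (A * A)) := by
  have h₁ : trace (A * ρ * A * ρ) = trace (ρ * A * ρ * A) := by
    rw [trace_mul_comm]; simp only [Matrix.mul_assoc]
  have h₂ : trace (ρ * A * A * ρ) = trace (ρ * ρ * (A * A)) := by
    rw [trace_mul_comm]; simp only [Matrix.mul_assoc]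
  have h₃ : trace (A * ρ * ρ * A) = trace (ρ * ρ * (A * A)) := by
    rw [trace_mul_comm, ← trace_mul_comm (A * A)]; simp only [Matrix.mul_assoc]
  have hexpand : (ρ * A - A * ρ) * (ρ * A - A * ρ) =
      ρ * A * ρ * A + A * ρ * A * ρ - ρ * A * A * ρ - A * ρ * ρ * A := by noncomm_ring
  rw [hexpand, trace_sub, trace_sub, trace_add, h₁, h₂, h₃]
  ring

lemma trace_diagonal_commutator_mul_self (d : ι → R) (B : Matrix ι ι R) :
    trace ((diagonal d * B - B * diagonal d) * (diagonal d * B - B * diagonal d)) =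
      -∑ a, ∑ b, (d a - d b) ^ 2 * (B a b * B b a) := by
  have hC : diagonal d * B - B * diagonal d = of fun a b => (d a - d b) * B a b := by
    ext a b
    simp only [Matrix.sub_apply, diagonal_mul, mul_diagonal, of_apply]
    ring
  simp only [hC, trace, Matrix.diag, mul_apply, of_apply, ← Finset.sum_neg_distrib]
  refine Finset.sum_congr rfl fun a _ => Finset.sum_congr rfl fun b _ => ?_
  ring

variable [StarRing R] {V : Matrix ι ι R}

lemma conjTranspose_mul_mul_distrib (hV : V * Vᴴ = 1) (X Y : Matrix ι ι R) :
    Vᴴ * (X * Y) * V = Vᴴ * X * V * (Vᴴ * Y * V) := by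
  simp only [Matrix.mul_assoc, ← Matrix.mul_assoc V, hV, Matrix.one_mul]

lemma trace_conjTranspose_mul_mul (hV : V * Vᴴ = 1) (X : Matrix ι ι R) :
    trace (Vᴴ * X * V) = trace X := by
  rw [trace_mul_cycle, hV, Matrix.one_mul]

end Conjugation

section OrthonormalFamily

variable {ι R : Type*} [Fintype ι] [CommRing R] [StarRing R] {v : ι → ι → R}

lemma conjTranspose_mul_mul_transpose_of_apply (A : Matrix ι ι R) (a b : ι) :
    ((of v)ᵀᴴ * A * (of v)ᵀ) a b = star (v a) ⬝ᵥ (A *ᵥ v b) := by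
  rw [mul_mul_apply]
  rfl

variable [DecidableEq ι]

lemma sum_smul_vecMulVec_eq_mul_diagonal_mul (c : ι → R) :
    ∑ a, c a • vecMulVec (v a) (star (v a)) = (of v)ᵀ * diagonal c * (of v)ᵀᴴ := by
  ext i j
  rw [mul_apply]
  simp only [Matrix.sum_apply, Matrix.smul_apply, vecMulVec_apply, mul_diagonal,
    transpose_apply, conjTranspose_apply, of_apply, Pi.star_apply, smul_eq_mul]
  refine Finset.sum_congr rfl fun a _ => ?_
  ring

variable (hv : ∀ a b, star (v a) ⬝ᵥ v b = if a = b then 1 else 0)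
include hv

lemma conjTranspose_mul_self_of_orthonormal : (of v)ᵀᴴ * (of v)ᵀ = 1 := by
  ext a b
  rw [one_apply, ← hv]
  rfl

lemma mul_conjTranspose_self_of_orthonormal : (of v)ᵀ * (of v)ᵀᴴ = 1 :=
  mul_eq_one_comm.mp (conjTranspose_mul_self_of_orthonormal hv)

lemma conjTranspose_mul_mul_eq_diagonal_of_orthonormal {ρ : Matrix ι ι R} {c : ι → R}
    (hρ : ρ = ∑ a, c a • vecMulVec (v a) (star (v a))) :
    (of v)ᵀᴴ * ρ * (of v)ᵀ = diagonal c := by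
  rw [hρ, sum_smul_vecMulVec_eq_mul_diagonal_mul, ← Matrix.mul_assoc, ← Matrix.mul_assoc,
    conjTranspose_mul_self_of_orthonormal hv, Matrix.one_mul, Matrix.mul_assoc,
    conjTranspose_mul_self_of_orthonormal hv, Matrix.mul_one]

end OrthonormalFamily

lemma sum_sq_sub_mul_normSq_le_mul_qfi {ι : Type*} [Fintype ι] {v : ι → ι → ℂ} {lam : ι → ℝ} {μ : ℝ}
    (hlam₀ : ∀ a, 0 ≤ lam a) (hlamμ : ∀ a, lam a ≤ μ) (A : Matrix ι ι ℂ) :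
    ∑ a, ∑ b, (lam a - lam b) ^ 2 * Complex.normSq (star (v a) ⬝ᵥ (A *ᵥ v b)) ≤
      μ * qfi lam v A := by
  simp only [qfi, Finset.mul_sum]
  refine Finset.sum_le_sum fun a _ => Finset.sum_le_sum fun b _ => ?_
  have hn := Complex.normSq_nonneg (star (v a) ⬝ᵥ (A *ᵥ v b))
  have ha := hlam₀ a; have hb := hlam₀ b; have haμ := hlamμ a; have hbμ := hlamμ b
  split_ifs with hpos
  · rw [show ∀ d s n : ℝ, μ * (2 * (d / s * n)) = 2 * μ * (d * n) / s by intros; ring,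
      le_div_iff₀ hpos]
    have : 0 ≤ (lam a - lam b) ^ 2 * Complex.normSq (star (v a) ⬝ᵥ (A *ᵥ v b)) := by positivity
    nlinarith
  · have ha0 : lam a = 0 := by linarith
    have hb0 : lam b = 0 := by linarith
    simp [ha0, hb0]

section SpectralForm

variable {ι : Type*} [Fintype ι] [DecidableEq ι] {v : ι → ι → ℂ} {lam : ι → ℝ}
  {ρ : Matrix ι ι ℂ} (hv : ∀ a b, star (v a) ⬝ᵥ v b = if a = b then 1 else 0)
  (hρ : ρ = ∑ a, (lam a : ℂ) • vecMulVec (v a) (star (v a)))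
include hv hρ

lemma eq_zero_or_eq_of_mul_self_eq_smul {μ : ℝ} (h : ρ * ρ = (μ : ℂ) • ρ) (a : ι) :
    lam a = 0 ∨ lam a = μ := by
  have hV := mul_conjTranspose_self_of_orthonormal hv
  have hD := conjTranspose_mul_mul_eq_diagonal_of_orthonormal hv hρ
  have hconj := congrArg (fun X => (of v)ᵀᴴ * X * (of v)ᵀ) h
  rw [conjTranspose_mul_mul_distrib hV, Matrix.mul_smul, Matrix.smul_mul, hD,
    diagonal_mul_diagonal] at hconj
  have haa := congrFun₂ hconj a a
  simp only [Matrix.smul_apply, diagonal_apply_eq, smul_eq_mul] at haa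
  have : lam a * (lam a - μ) = 0 := by
    rw [mul_sub, sub_eq_zero, mul_comm (lam a) μ]
    exact_mod_cast haa
  rcases mul_eq_zero.mp this with h0 | hμ
  · exact Or.inl h0
  · exact Or.inr (sub_eq_zero.mp hμ)

theorem commIL_eq_half_sum_of_orthonormal {A : Matrix ι ι ℂ} (hA : A.IsHermitian) :
    commIL ρ A =
      1 / 2 * ∑ a, ∑ b, (lam a - lam b) ^ 2 * Complex.normSq (star (v a) ⬝ᵥ (A *ᵥ v b)) := by
  have hV := mul_conjTranspose_self_of_orthonormal hv
  have hD := conjTranspose_mul_mul_eq_diagonal_of_orthonormal hv hρ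
  have hnormSq : ∀ a b, ((of v)ᵀᴴ * A * (of v)ᵀ) a b * ((of v)ᵀᴴ * A * (of v)ᵀ) b a =
      Complex.normSq (((of v)ᵀᴴ * A * (of v)ᵀ) a b) := fun a b => by
    rw [← (isHermitian_conjTranspose_mul_mul _ hA).apply b a, Complex.star_def,
      Complex.mul_conj]
  have hconj : (of v)ᵀᴴ * (ρ * A - A * ρ) * (of v)ᵀ =
      diagonal (fun a => (lam a : ℂ)) * ((of v)ᵀᴴ * A * (of v)ᵀ) -
        ((of v)ᵀᴴ * A * (of v)ᵀ) * diagonal (fun a => (lam a : ℂ)) := by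
    rw [Matrix.mul_sub, Matrix.sub_mul, conjTranspose_mul_mul_distrib hV,
      conjTranspose_mul_mul_distrib hV, hD]
  have htrace : trace ((ρ * A - A * ρ) * (ρ * A - A * ρ)) =
      -∑ a, ∑ b, (((lam a - lam b) ^ 2 *
        Complex.normSq (star (v a) ⬝ᵥ (A *ᵥ v b)) : ℝ) : ℂ) := by
    rw [← trace_conjTranspose_mul_mul hV, conjTranspose_mul_mul_distrib hV, hconj,
      trace_diagonal_commutator_mul_self]
    simp only [hnormSq]
    simp only [conjTranspose_mul_mul_transpose_of_apply]
    push_cast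
    rfl
  rw [commIL, htrace, neg_mul_neg]
  simp_rw [← Complex.ofReal_sum]
  rw [show (1 / 2 : ℂ) = ((1 / 2 : ℝ) : ℂ) by push_cast; rfl, ← Complex.ofReal_mul,
    Complex.ofReal_re]

theorem two_mul_commIL_le_mul_qfi {A : Matrix ι ι ℂ} (hA : A.IsHermitian) {μ : ℝ}
    (hlam₀ : ∀ a, 0 ≤ lam a) (hlamμ : ∀ a, lam a ≤ μ) :
    2 * commIL ρ A ≤ μ * qfi lam v A := by
  rw [commIL_eq_half_sum_of_orthonormal hv hρ hA]
  linarith [sum_sq_sub_mul_normSq_le_mul_qfi (v := v) hlam₀ hlamμ A]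

end SpectralForm

section GHZStates

variable {N k l : ℕ}

lemma baseStr_apply_eq_one_iff (i : Fin N) : baseStr N k i = 1 ↔ N - k ≤ i := by
  unfold baseStr; split_ifs <;> simp_all

lemma baseStr_injOn (hk : k ≤ N) (hl : l ≤ N) (h : baseStr N k = baseStr N l) : k = l := by
  by_contra hne
  wlog hkl : k < l generalizing k l
  · exact this hl hk h.symm (Ne.symm hne) (by omega)
  have := congrArg (· = 1) (congrFun h ⟨N - l, by omega⟩)
  simp only [baseStr_apply_eq_one_iff, eq_iff_iff] at this
  omega

lemma flipStr_eq_baseStr (N k : ℕ) : flipStr N k = fun i => 1 - baseStr N k i := by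
  funext i; unfold flipStr baseStr; split_ifs <;> rfl

lemma flipStr_injOn (hk : k ≤ N) (hl : l ≤ N) (h : flipStr N k = flipStr N l) : k = l := by
  refine baseStr_injOn hk hl (funext fun i => ?_)
  have := congrFun h i
  simp only [flipStr_eq_baseStr] at this
  omega

lemma baseStr_ne_flipStr (hk : k < N) (hl : l < N) : baseStr N k ≠ flipStr N l := by
  intro h
  have := congrFun h ⟨0, by omega⟩
  simp only [baseStr, flipStr] at this
  rw [if_neg (by simp; omega), if_neg (by simp; omega)] at this
  exact absurd this (by decide)

lemma sq_ofReal_sqrt_two : ((Real.sqrt 2 : ℝ) : ℂ) ^ 2 = 2 := by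
  rw [← Complex.ofReal_pow, Real.sq_sqrt zero_le_two]
  norm_num

lemma ofReal_sqrt_two_ne_zero : ((Real.sqrt 2 : ℝ) : ℂ) ≠ 0 := by
  simp

lemma psiK_apply_baseStr (hk : k < N) (hl : l < N) :
    psiK N k (baseStr N l) = if k = l then (Real.sqrt 2 : ℂ)⁻¹ else 0 := by
  rw [psiK, if_neg (baseStr_ne_flipStr hl hk)]
  split_ifs with h₁ h₂ h₂
  · simp
  · exact absurd (baseStr_injOn hl.le hk.le h₁).symm h₂
  · exact absurd (h₂ ▸ rfl) h₁
  · simp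

lemma psiK_apply_flipStr (hk : k < N) (hl : l < N) :
    psiK N k (flipStr N l) = if k = l then (Real.sqrt 2 : ℂ)⁻¹ else 0 := by
  rw [psiK, if_neg (baseStr_ne_flipStr hk hl).symm]
  split_ifs with h₁ h₂ h₂
  · simp
  · exact absurd (flipStr_injOn hl.le hk.le h₁).symm h₂
  · exact absurd (h₂ ▸ rfl) h₁
  · simp

lemma star_psiK (N k : ℕ) : star (psiK N k) = psiK N k := by
  funext s
  simp only [Pi.star_apply, psiK, star_div₀, star_add, apply_ite star, star_one, star_zero,
    Complex.star_def, Complex.conj_ofReal]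

lemma star_psiK_dotProduct (w : (Fin N → Fin 2) → ℂ) :
    star (psiK N k) ⬝ᵥ w = (w (baseStr N k) + w (flipStr N k)) / (Real.sqrt 2 : ℂ) := by
  simp only [star_psiK, dotProduct, psiK, div_mul_eq_mul_div, add_mul, ite_mul, one_mul,
    zero_mul, ← Finset.sum_div, Finset.sum_add_distrib, Finset.sum_ite_eq', Finset.mem_univ,
    if_true]

lemma star_psiK_dotProduct_psiK (hk : k < N) (hl : l < N) :
    star (psiK N k) ⬝ᵥ psiK N l = if k = l then 1 else 0 := by
  rw [star_psiK_dotProduct, psiK_apply_baseStr hl hk, psiK_apply_flipStr hl hk]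
  split_ifs with h₁ h₂ h₂
  · have := ofReal_sqrt_two_ne_zero
    field_simp
    linear_combination -sq_ofReal_sqrt_two
  · exact absurd h₁.symm h₂
  · exact absurd h₂.symm h₁
  · simp

end GHZStates

section TotalSpin

variable {N k l : ℕ}

def totalSpinZ (s : Fin N → Fin 2) : ℂ := ∑ i : Fin N, if s i = 0 then 1 else -1

lemma pauliZTotal_eq_diagonal (N : ℕ) : pauliZTotal N = diagonal totalSpinZ := rfl

lemma isHermitian_pauliZTotal (N : ℕ) : (pauliZTotal N).IsHermitian := by
  refine isHermitian_diagonal_of_self_adjoint _ (funext fun s => ?_)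
  simp [apply_ite star]

lemma totalSpinZ_baseStr (hk : k ≤ N) : totalSpinZ (baseStr N k) = N - 2 * k := by
  obtain ⟨m, rfl⟩ := Nat.exists_eq_add_of_le' hk
  rw [show ((m + k : ℕ) : ℂ) - 2 * k = m - k by push_cast; ring]
  simp [totalSpinZ, baseStr, Fin.sum_univ_add, sub_eq_add_neg]

lemma totalSpinZ_flipStr (hk : k ≤ N) : totalSpinZ (flipStr N k) = -(N - 2 * k) := by
  obtain ⟨m, rfl⟩ := Nat.exists_eq_add_of_le' hk
  rw [show -(((m + k : ℕ) : ℂ) - 2 * k) = -m + k by push_cast; ring]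
  simp [totalSpinZ, flipStr, Fin.sum_univ_add, fun x : Fin m => not_le.mpr x.isLt]

lemma star_psiK_dotProduct_pauliZTotal_mulVec_psiK (hk : k < N) (hl : l < N) :
    star (psiK N l) ⬝ᵥ (pauliZTotal N *ᵥ psiK N k) = 0 := by
  rw [star_psiK_dotProduct, pauliZTotal_eq_diagonal, mulVec_diagonal, mulVec_diagonal,
    totalSpinZ_baseStr hl.le, totalSpinZ_flipStr hl.le, psiK_apply_baseStr hk hl,
    psiK_apply_flipStr hk hl]
  ring

lemma star_psiK_dotProduct_pauliZTotal_sq_mulVec_psiK (hk : k < N) :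
    star (psiK N k) ⬝ᵥ ((pauliZTotal N * pauliZTotal N) *ᵥ psiK N k) =
      ((N : ℂ) - 2 * k) ^ 2 := by
  have := ofReal_sqrt_two_ne_zero
  rw [star_psiK_dotProduct, pauliZTotal_eq_diagonal, diagonal_mul_diagonal, mulVec_diagonal,
    mulVec_diagonal, totalSpinZ_baseStr hk.le, totalSpinZ_flipStr hk.le,
    psiK_apply_baseStr hk hk, psiK_apply_flipStr hk hk, if_pos rfl]
  field_simp
  linear_combination -((N : ℂ) - 2 * k) ^ 2 * sq_ofReal_sqrt_two

end TotalSpin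

section RankOneSums

variable {ι κ R : Type*} [Fintype ι] [CommRing R] [StarRing R]

lemma sum_smul_vecMulVec_mul_mul_self (s : Finset κ) (c : κ → R) (x : κ → ι → R)
    (A : Matrix ι ι R) :
    (∑ k ∈ s, c k • vecMulVec (x k) (star (x k))) * A *
        (∑ k ∈ s, c k • vecMulVec (x k) (star (x k))) =
      ∑ k ∈ s, ∑ l ∈ s,
        (c k * c l * (star (x k) ⬝ᵥ (A *ᵥ x l))) • vecMulVec (x k) (star (x l)) := by
  rw [Finset.sum_mul, Finset.sum_mul]
  simp only [Finset.mul_sum]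
  refine Finset.sum_congr rfl fun k _ => Finset.sum_congr rfl fun l _ => ?_
  rw [Matrix.smul_mul, Matrix.smul_mul, Matrix.mul_smul, vecMulVec_mul,
    vecMulVec_mul_vecMulVec, vecMulVec_smul, smul_smul, smul_smul, ← dotProduct_mulVec,
    mul_right_comm]

lemma trace_sum_smul_vecMulVec_mul (s : Finset κ) (c : κ → R) (x : κ → ι → R)
    (M : Matrix ι ι R) :
    trace ((∑ k ∈ s, c k • vecMulVec (x k) (star (x k))) * M) =
      ∑ k ∈ s, c k * (star (x k) ⬝ᵥ (M *ᵥ x k)) := by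
  simp only [Finset.sum_mul, trace_sum, Matrix.smul_mul, trace_smul, vecMulVec_mul,
    trace_vecMulVec, smul_eq_mul, dotProduct_comm (x _), ← dotProduct_mulVec]

end RankOneSums

section RhoN

lemma rhoN_mul_pauliZTotal_mul_rhoN (N : ℕ) : rhoN N * pauliZTotal N * rhoN N = 0 := by
  rw [rhoN, sum_smul_vecMulVec_mul_mul_self]
  refine Finset.sum_eq_zero fun k hk => Finset.sum_eq_zero fun l hl => ?_
  rw [Finset.mem_range] at hk hl
  rw [star_psiK_dotProduct_pauliZTotal_mulVec_psiK (by omega) (by omega), mul_zero, zero_smul]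

lemma rhoN_mul_rhoN (N : ℕ) : rhoN N * rhoN N = ((2 / (N : ℝ) : ℝ) : ℂ) • rhoN N := by
  have h := sum_smul_vecMulVec_mul_mul_self (Finset.range (N / 2))
    (fun _ => ((2 / (N : ℝ) : ℝ) : ℂ)) (psiK N) 1
  rw [Matrix.mul_one] at h
  rw [rhoN, h, Finset.smul_sum]
  refine Finset.sum_congr rfl fun k hk => ?_
  rw [Finset.mem_range] at hk
  rw [Finset.sum_eq_single_of_mem k (Finset.mem_range.mpr hk), one_mulVec,
    star_psiK_dotProduct_psiK (by omega) (by omega), if_pos rfl, mul_one, smul_smul]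
  intro l hl hlk
  rw [Finset.mem_range] at hl
  rw [one_mulVec, star_psiK_dotProduct_psiK (by omega) (by omega), if_neg hlk.symm, mul_zero,
    zero_smul]

lemma trace_rhoN_mul_pauliZTotal_sq (N : ℕ) :
    trace (rhoN N * (pauliZTotal N * pauliZTotal N)) =
      ((2 / (N : ℝ) : ℝ) : ℂ) * ∑ k ∈ Finset.range (N / 2), ((N : ℂ) - 2 * k) ^ 2 := by
  rw [rhoN, trace_sum_smul_vecMulVec_mul, Finset.mul_sum]
  refine Finset.sum_congr rfl fun k hk => ?_
  rw [Finset.mem_range] at hk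
  rw [star_psiK_dotProduct_pauliZTotal_sq_mulVec_psiK (by omega)]

theorem commIL_rhoN (N : ℕ) :
    commIL (rhoN N) (pauliZTotal N) =
      (2 / (N : ℝ)) ^ 2 * ∑ k ∈ Finset.range (N / 2), ((N : ℝ) - 2 * k) ^ 2 := by
  rw [commIL, trace_commutator_mul_self, rhoN_mul_rhoN, Matrix.smul_mul, trace_smul,
    trace_rhoN_mul_pauliZTotal_sq, rhoN_mul_pauliZTotal_mul_rhoN, Matrix.zero_mul, trace_zero]
  have hreal : ∀ k : ℕ, ((N : ℂ) - 2 * k) ^ 2 = (((N : ℝ) - 2 * k) ^ 2 : ℝ) := by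
    intro k; push_cast; rfl
  simp only [hreal, ← Complex.ofReal_sum, ← Complex.ofReal_mul, mul_zero, zero_sub,
    smul_eq_mul, neg_mul_neg]
  rw [← mul_assoc, ← mul_assoc, one_div, inv_mul_cancel₀ two_ne_zero, one_mul,
    Complex.ofReal_re]
  ring

variable {N : ℕ}

theorem commIL_rhoN_of_even (hE : Even N) :
    commIL (rhoN N) (pauliZTotal N) =
      (2 / (N : ℝ)) ^ 2 * ∑ k ∈ Finset.range (N / 2 + 1), ((N : ℝ) - 2 * k) ^ 2 := by
  have hlast : (N : ℝ) - 2 * (N / 2 : ℕ) = 0 := by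
    obtain ⟨t, rfl⟩ := hE
    rw [show (t + t) / 2 = t by omega]
    push_cast
    ring
  rw [commIL_rhoN, Finset.sum_range_succ, hlast]
  ring

lemma commIL_rhoN_pos (hN : 2 ≤ N) : 0 < commIL (rhoN N) (pauliZTotal N) := by
  have hN₀ : (0 : ℝ) < N := by exact_mod_cast (by omega : 0 < N)
  rw [commIL_rhoN]
  refine mul_pos (by positivity) (Finset.sum_pos' (fun _ _ => sq_nonneg _) ⟨0, ?_, ?_⟩)
  · exact Finset.mem_range.mpr (by omega)
  · simpa using pow_pos hN₀ 2

variable {lam : (Fin N → Fin 2) → ℝ} {v : (Fin N → Fin 2) → (Fin N → Fin 2) → ℂ}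
  (hv : ∀ a b, star (v a) ⬝ᵥ v b = if a = b then 1 else 0)
  (hdec : rhoN N = ∑ a, (lam a : ℂ) • vecMulVec (v a) (star (v a)))
include hv hdec

lemma natCast_mul_commIL_rhoN_le_qfi (hN : 0 < N) :
    N * commIL (rhoN N) (pauliZTotal N) ≤ qfi lam v (pauliZTotal N) := by
  have hN₀ : (0 : ℝ) < N := by exact_mod_cast hN
  have hlam := eq_zero_or_eq_of_mul_self_eq_smul hv hdec (rhoN_mul_rhoN N)
  have h := two_mul_commIL_le_mul_qfi hv hdec (isHermitian_pauliZTotal N) (μ := 2 / N)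
    (fun a => by rcases hlam a with h | h <;> rw [h]; positivity)
    (fun a => by rcases hlam a with h | h <;> rw [h]; positivity)
  calc (N : ℝ) * commIL (rhoN N) (pauliZTotal N)
      = N / 2 * (2 * commIL (rhoN N) (pauliZTotal N)) := by ring
    _ ≤ N / 2 * (2 / N * qfi lam v (pauliZTotal N)) := by gcongr
    _ = qfi lam v (pauliZTotal N) := by field_simp

lemma commIL_rhoN_div_qfi_mem_Icc (hN : 2 ≤ N) :
    commIL (rhoN N) (pauliZTotal N) / qfi lam v (pauliZTotal N) ∈ Set.Icc 0 (1 / (N : ℝ)) := by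
  have hN₀ : (0 : ℝ) < N := by exact_mod_cast (by omega : 0 < N)
  have hI := commIL_rhoN_pos hN
  have hF := natCast_mul_commIL_rhoN_le_qfi hv hdec (by omega)
  have hF₀ : 0 < qfi lam v (pauliZTotal N) := lt_of_lt_of_le (by positivity) hF
  refine ⟨by positivity, ?_⟩
  rw [div_le_div_iff₀ hF₀ hN₀]
  linarith

end RhoN

theorem commIL_rhoN_and_ratio_tendsto_zero_general
    (lam : ∀ N : ℕ, (Fin N → Fin 2) → ℝ)
    (v : ∀ N : ℕ, (Fin N → Fin 2) → (Fin N → Fin 2) → ℂ)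
    (hortho : ∀ N, ∀ a b, star (v N a) ⬝ᵥ v N b = if a = b then (1 : ℂ) else 0)
    (hdec : ∀ N, 0 < N → Even N →
      rhoN N = ∑ a, ((lam N a : ℝ) : ℂ) • Matrix.vecMulVec (v N a) (star (v N a))) :
    (∀ N : ℕ, 0 < N → Even N →
      commIL (rhoN N) (pauliZTotal N) =
        (2 / (N : ℝ)) ^ 2 * ∑ k ∈ Finset.range (N / 2 + 1), ((N : ℝ) - 2 * k) ^ 2) ∧
    Tendsto (fun m : ℕ =>
        commIL (rhoN (2 * m + 2)) (pauliZTotal (2 * m + 2)) /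
          qfi (lam (2 * m + 2)) (v (2 * m + 2)) (pauliZTotal (2 * m + 2)))
      atTop (𝓝 0) := by
  refine ⟨fun N _ hE => commIL_rhoN_of_even hE, ?_⟩
  have hbound := fun m : ℕ => commIL_rhoN_div_qfi_mem_Icc (N := 2 * m + 2) (hortho _)
    (hdec _ (by omega) ⟨m + 1, by ring⟩) (by omega)
  refine squeeze_zero (fun m => (hbound m).1) (fun m => (hbound m).2) ?_
  exact tendsto_one_div_atTop_nhds_zero_nat.comp
    (tendsto_atTop_mono (fun m => by simp only [id]; omega) tendsto_id)

/-- `I_L(ρ_N, Z) = (2/N)² ∑_{k=0}^{N/2} (N-2k)²` (which is `O(N)`), and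
hence — with `F(ρ_N,Z)` computed from any family of spectral decompositions of the
`ρ_N` — the ratio `I_L(ρ_N,Z)/F(ρ_N,Z)` tends to `0` as (even) `N → ∞`. -/
theorem commIL_rhoN_and_ratio_tendsto_zero
    (lam : ∀ N : ℕ, (Fin N → Fin 2) → ℝ)
    (v : ∀ N : ℕ, (Fin N → Fin 2) → (Fin N → Fin 2) → ℂ)
    (hortho : ∀ N, ∀ a b, star (v N a) ⬝ᵥ v N b = if a = b then (1 : ℂ) else 0)
    (hlam : ∀ N a, 0 ≤ lam N a)
    (hdec : ∀ N, 0 < N → Even N →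
      rhoN N = ∑ a, ((lam N a : ℝ) : ℂ) • Matrix.vecMulVec (v N a) (star (v N a))) :
    (∀ N : ℕ, 0 < N → Even N →
      commIL (rhoN N) (pauliZTotal N) =
        (2 / (N : ℝ)) ^ 2 * ∑ k ∈ Finset.range (N / 2 + 1), ((N : ℝ) - 2 * k) ^ 2) ∧
    Tendsto (fun m : ℕ =>
        commIL (rhoN (2 * m + 2)) (pauliZTotal (2 * m + 2)) /
          qfi (lam (2 * m + 2)) (v (2 * m + 2)) (pauliZTotal (2 * m + 2)))
      atTop (𝓝 0) :=
  commIL_rhoN_and_ratio_tendsto_zero_general lam v hortho hdec
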